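/- There exists a constant C > 0 (depending only on μ₀, μ₁, T) such that for all τ ≥ 2 and all x, ∫₀ᵀ θ(t)^p e^{2τθ(t)φ(x)} dt ≤ C·e^{2τθ(T/2)φ(x)}/√τ, whenever φ(x) ≤ −μ₀ < 0, |φ(x)| ≤ μ₁, θ(t) ≥ θ(T/2) + (1/T²)(t − T/2)², θ(t) ≥ θ(T/2), and θ(t)^p e^{−2μ₀θ(t)} ≤ C₀ for all t (p ∈ ℝ fixed). -/

import Mathlib

open Real

/-!
Since `θ(t) ≥ θ(T/2) + (t - T/2)²/T²` and `φ ≤ -μ₀`, the factor `e^{2τθ(t)φ}` splits into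
`e^{-2μ₀θ(t)}`, which together with `θ(t)^p` is bounded by `C₀`, a factor comparable to
`e^{2τθ(T/2)φ}`, and the Gaussian `e^{-2(τ-1)μ₀(t - T/2)²/T²}`, whose integral is `O(T/√τ)`.
-/

lemma exponent_splitting {τ θt θh s φ μ₀ μ₁ : ℝ} (hτ : 1 ≤ τ) (hμ₀ : 0 ≤ μ₀) (hθh : 0 ≤ θh)
    (hs : 0 ≤ s) (hθt : θh + s ≤ θt) (hφ₀ : φ ≤ -μ₀) (hφ₁ : -φ ≤ μ₁) :
    2 * τ * θt * φ ≤
      -2 * μ₀ * θt + 2 * θh * μ₁ + 2 * τ * θh * φ + -(2 * (τ - 1) * μ₀) * s := by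
  have hθt₀ : 0 ≤ θt := by linarith
  nlinarith [mul_nonneg hθt₀ (by linarith : 0 ≤ -μ₀ - φ),
    mul_nonneg (by linarith : 0 ≤ τ - 1) (mul_nonneg (by linarith : 0 ≤ θt - θh - s)
      (by linarith : 0 ≤ -φ)),
    mul_nonneg (by linarith : 0 ≤ τ - 1) (mul_nonneg hs (by linarith : 0 ≤ -μ₀ - φ)),
    mul_nonneg hθh (by linarith : 0 ≤ μ₁ + φ)]

lemma rpow_mul_exp_le_of_exponent_splitting {τ θt θh s φ μ₀ μ₁ p C₀ : ℝ} (hτ : 1 ≤ τ)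
    (hμ₀ : 0 ≤ μ₀) (hθh : 0 ≤ θh) (hs : 0 ≤ s) (hθt : θh + s ≤ θt) (hφ₀ : φ ≤ -μ₀)
    (hφ₁ : -φ ≤ μ₁) (hC₀ : θt ^ p * exp (-2 * μ₀ * θt) ≤ C₀) :
    θt ^ p * exp (2 * τ * θt * φ) ≤
      C₀ * exp (2 * θh * μ₁) * exp (2 * τ * θh * φ) * exp (-(2 * (τ - 1) * μ₀) * s) := by
  have hθt₀ : 0 ≤ θt := by linarith
  calc θt ^ p * exp (2 * τ * θt * φ)
      ≤ θt ^ p * (exp (-2 * μ₀ * θt) * exp (2 * θh * μ₁) * exp (2 * τ * θh * φ) *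
          exp (-(2 * (τ - 1) * μ₀) * s)) := by
        simp only [← exp_add]
        gcongr
        exact exponent_splitting hτ hμ₀ hθh hs hθt hφ₀ hφ₁
    _ = θt ^ p * exp (-2 * μ₀ * θt) *
          (exp (2 * θh * μ₁) * exp (2 * τ * θh * φ) * exp (-(2 * (τ - 1) * μ₀) * s)) := by ring
    _ ≤ C₀ * (exp (2 * θh * μ₁) * exp (2 * τ * θh * φ) * exp (-(2 * (τ - 1) * μ₀) * s)) := by
        gcongr
    _ = _ := by ring

lemma integral_exp_neg_mul_sq_sub_le {a : ℝ} (ha : 0 < a) (c : ℝ) {l u : ℝ} (hlu : l ≤ u) :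
    ∫ t in l..u, exp (-a * (t - c) ^ 2) ≤ sqrt (π / a) := by
  rw [intervalIntegral.integral_comp_sub_right (fun s ↦ exp (-a * s ^ 2)) c,
    intervalIntegral.integral_of_le (by linarith), ← integral_gaussian a]
  exact MeasureTheory.setIntegral_le_integral (integrable_exp_neg_mul_sq ha)
    (Filter.Eventually.of_forall fun s ↦ (exp_pos _).le)

lemma integral_exp_neg_mul_sq_sub_half_le {T μ₀ τ : ℝ} (hT : 0 < T) (hμ₀ : 0 < μ₀) (hτ : 2 ≤ τ) :
    ∫ t in (0 : ℝ)..T, exp (-(2 * (τ - 1) * μ₀) * (1 / T ^ 2 * (t - T / 2) ^ 2)) ≤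
      T * sqrt (π / μ₀) / sqrt τ := by
  have hτ₀ : 0 < τ := by linarith
  have ha : 0 < 2 * (τ - 1) * μ₀ / T ^ 2 := div_pos (by nlinarith) (by positivity)
  have hrate : π / (2 * (τ - 1) * μ₀ / T ^ 2) ≤ T ^ 2 * (π / μ₀) / τ := by
    rw [show π / (2 * (τ - 1) * μ₀ / T ^ 2) = T ^ 2 * (π / μ₀) / (2 * (τ - 1)) by field_simp]
    gcongr
    linarith
  calc ∫ t in (0 : ℝ)..T, exp (-(2 * (τ - 1) * μ₀) * (1 / T ^ 2 * (t - T / 2) ^ 2))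
      = ∫ t in (0 : ℝ)..T, exp (-(2 * (τ - 1) * μ₀ / T ^ 2) * (t - T / 2) ^ 2) := by
        congr 1; funext t; congr 1; ring
    _ ≤ sqrt (π / (2 * (τ - 1) * μ₀ / T ^ 2)) := integral_exp_neg_mul_sq_sub_le ha _ hT.le
    _ ≤ sqrt (T ^ 2 * (π / μ₀) / τ) := sqrt_le_sqrt hrate
    _ = T * sqrt (π / μ₀) / sqrt τ := by
      rw [sqrt_div' _ hτ₀.le, sqrt_mul (sq_nonneg T), sqrt_sq hT.le]

lemma intervalIntegral.integral_le_of_le_of_nonneg {f g : ℝ → ℝ} {a b : ℝ} (hab : a ≤ b)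
    (hg : IntervalIntegrable g MeasureTheory.volume a b) (hg₀ : ∀ t ∈ Set.Icc a b, 0 ≤ g t)
    (hfg : ∀ t ∈ Set.Icc a b, f t ≤ g t) :
    ∫ t in a..b, f t ≤ ∫ t in a..b, g t := by
  by_cases hf : IntervalIntegrable f MeasureTheory.volume a b
  · exact intervalIntegral.integral_mono_on hab hf hg hfg
  · rw [intervalIntegral.integral_undef hf]
    exact intervalIntegral.integral_nonneg hab hg₀

theorem weighted_time_integral_bound_general (T p μ₀ μ₁ C₀ : ℝ) (hT : 0 < T) (hμ₀ : 0 < μ₀)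
    (θ : ℝ → ℝ)
    (hθpos : ∀ t ∈ Set.Icc (0 : ℝ) T, 0 < θ t)
    (hθconv : ∀ t ∈ Set.Icc (0 : ℝ) T, θ (T / 2) + 1 / T ^ 2 * (t - T / 2) ^ 2 ≤ θ t)
    (hbound : ∀ t ∈ Set.Icc (0 : ℝ) T, θ t ^ p * Real.exp (-2 * μ₀ * θ t) ≤ C₀) :
    ∃ C > 0, ∀ τ : ℝ, 2 ≤ τ → ∀ φx : ℝ, φx ≤ -μ₀ → |φx| ≤ μ₁ →
      ∫ t in (0 : ℝ)..T, θ t ^ p * Real.exp (2 * τ * θ t * φx) ≤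
        C * Real.exp (2 * τ * θ (T / 2) * φx) / Real.sqrt τ := by
  have hhalf : T / 2 ∈ Set.Icc (0 : ℝ) T := ⟨by linarith, by linarith⟩
  have hθhalf : 0 < θ (T / 2) := hθpos _ hhalf
  have hC₀ : 0 < C₀ := (mul_pos (rpow_pos_of_pos hθhalf p) (exp_pos _)).trans_le (hbound _ hhalf)
  refine ⟨C₀ * exp (2 * θ (T / 2) * μ₁) * T * sqrt (π / μ₀), by positivity, ?_⟩
  intro τ hτ φx hφ₀ hφ₁
  calc ∫ t in (0 : ℝ)..T, θ t ^ p * exp (2 * τ * θ t * φx)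
      ≤ ∫ t in (0 : ℝ)..T, C₀ * exp (2 * θ (T / 2) * μ₁) * exp (2 * τ * θ (T / 2) * φx) *
          exp (-(2 * (τ - 1) * μ₀) * (1 / T ^ 2 * (t - T / 2) ^ 2)) :=
        intervalIntegral.integral_le_of_le_of_nonneg hT.le
          (Continuous.intervalIntegrable (by fun_prop) _ _) (fun _ _ ↦ by positivity)
          fun t ht ↦ rpow_mul_exp_le_of_exponent_splitting (by linarith) hμ₀.le hθhalf.le
            (by positivity) (hθconv t ht) hφ₀ ((neg_le_abs φx).trans hφ₁) (hbound t ht)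
    _ = C₀ * exp (2 * θ (T / 2) * μ₁) * exp (2 * τ * θ (T / 2) * φx) *
          ∫ t in (0 : ℝ)..T, exp (-(2 * (τ - 1) * μ₀) * (1 / T ^ 2 * (t - T / 2) ^ 2)) :=
        intervalIntegral.integral_const_mul _ _
    _ ≤ C₀ * exp (2 * θ (T / 2) * μ₁) * exp (2 * τ * θ (T / 2) * φx) *
          (T * sqrt (π / μ₀) / sqrt τ) := by
        gcongr
        exact integral_exp_neg_mul_sq_sub_half_le hT hμ₀ hτ
    _ = _ := by ring

/-- Key weighted-time-integral estimate (Lemma 2.8 of the paper):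
`∫₀ᵀ θ(t)^p e^{2τθ(t)φ(x)} dt ≤ C e^{2τθ(T/2)φ(x)} / √τ`. -/
theorem weighted_time_integral_bound (T p μ₀ μ₁ C₀ : ℝ) (hT : 0 < T) (hμ₀ : 0 < μ₀)
    (θ : ℝ → ℝ)
    (hθpos : ∀ t ∈ Set.Icc (0 : ℝ) T, 0 < θ t)
    (hθconv : ∀ t ∈ Set.Icc (0 : ℝ) T, θ (T / 2) + 1 / T ^ 2 * (t - T / 2) ^ 2 ≤ θ t)
    (hθmin : ∀ t ∈ Set.Icc (0 : ℝ) T, θ (T / 2) ≤ θ t)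
    (hbound : ∀ t ∈ Set.Icc (0 : ℝ) T, θ t ^ p * Real.exp (-2 * μ₀ * θ t) ≤ C₀) :
    ∃ C > 0, ∀ τ : ℝ, 2 ≤ τ → ∀ φx : ℝ, φx ≤ -μ₀ → |φx| ≤ μ₁ →
      ∫ t in (0 : ℝ)..T, θ t ^ p * Real.exp (2 * τ * θ t * φx) ≤
        C * Real.exp (2 * τ * θ (T / 2) * φx) / Real.sqrt τ :=
  weighted_time_integral_bound_general T p μ₀ μ₁ C₀ hT hμ₀ θ hθpos hθconv hbound
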